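/- arXiv:1708.09113 — 2 statements merged into one kernel-verified Lean document; each statement's English description precedes it below -/
import Mathlib

section
/- Let X(s) = (x(s), y(s)) be an arc-length parametrized immersed curve in ℝ² satisfying the self-shrinker equation κ(s) = α ν(s) for a constant α < 0, where κ is the signed curvature and ν = X·N is the normal support function. Then the quantity κ(s) · exp(α (x(s)² + y(s)²)/2) is constant along the curve. -/
/-- Conservation law: κ·e^{α(x²+y²)/2} is constant along a self-shrinking curve. -/
theorem stmt_1 (α : ℝ) (hα : α < 0) (x y : ℝ → ℝ)
    (hx : ContDiff ℝ (⊤ : ℕ∞) x) (hy : ContDiff ℝ (⊤ : ℕ∞) y)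
    (harc : ∀ s, (deriv x s) ^ 2 + (deriv y s) ^ 2 = 1)
    (κ ν : ℝ → ℝ)
    (hκ : ∀ s, κ s = deriv x s * deriv (deriv y) s - deriv y s * deriv (deriv x) s)
    (hν : ∀ s, ν s = x s * (-(deriv y s)) + y s * deriv x s)
    (hss : ∀ s, κ s = α * ν s) :
    ∃ C : ℝ, ∀ s, κ s * Real.exp (α * ((x s) ^ 2 + (y s) ^ 2) / 2) = C := by
  have hxd : Differentiable ℝ x := hx.differentiable (by simp)
  have hyd : Differentiable ℝ y := hy.differentiable (by simp)
  have hx1 : ContDiff ℝ (⊤:ℕ∞) (deriv x) := (contDiff_infty_iff_deriv.mp (hx.of_le (by simp))).2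
  have hy1 : ContDiff ℝ (⊤:ℕ∞) (deriv y) := (contDiff_infty_iff_deriv.mp (hy.of_le (by simp))).2
  have hxd1 : Differentiable ℝ (deriv x) := hx1.differentiable (by simp)
  have hyd1 : Differentiable ℝ (deriv y) := hy1.differentiable (by simp)
  have hGd : ∀ s, HasDerivAt
      (fun t => α * (x t * (-(deriv y t)) + y t * deriv x t) *
        Real.exp (α * ((x t) ^ 2 + (y t) ^ 2) / 2)) 0 s := by
    intro s
    have hX : HasDerivAt x (deriv x s) s := (hxd s).hasDerivAt
    have hY : HasDerivAt y (deriv y s) s := (hyd s).hasDerivAt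
    have hX' : HasDerivAt (deriv x) (deriv (deriv x) s) s := (hxd1 s).hasDerivAt
    have hY' : HasDerivAt (deriv y) (deriv (deriv y) s) s := (hyd1 s).hasDerivAt
    have horth : deriv x s * deriv (deriv x) s + deriv y s * deriv (deriv y) s = 0 := by
      have h1 : HasDerivAt (fun t => (deriv x t) ^ 2 + (deriv y t) ^ 2)
          ((2 : ℕ) * deriv x s ^ 1 * deriv (deriv x) s
            + (2 : ℕ) * deriv y s ^ 1 * deriv (deriv y) s) s :=
        (hX'.pow 2).add (hY'.pow 2)
      have h2 : (fun t => (deriv x t) ^ 2 + (deriv y t) ^ 2) = fun _ => (1 : ℝ) :=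
        funext harc
      rw [h2] at h1
      have h3 := h1.unique (hasDerivAt_const s 1)
      push_cast at h3
      nlinarith [h3]
    have hc : deriv (deriv x) s = -(κ s) * deriv y s := by
      rw [hκ s]
      linear_combination deriv x s * horth - deriv (deriv x) s * harc s
    have hd : deriv (deriv y) s = κ s * deriv x s := by
      rw [hκ s]
      linear_combination deriv y s * horth - deriv (deriv y) s * harc s
    have hκα : α * (x s * (-(deriv y s)) + y s * deriv x s) = κ s := by
      rw [hss s, hν s]
    have hP : HasDerivAt (fun t => α * (x t * (-(deriv y t)) + y t * deriv x t))
        (α * ((deriv x s * (-(deriv y s)) + x s * (-(deriv (deriv y) s)))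
          + (deriv y s * deriv x s + y s * deriv (deriv x) s))) s :=
      ((hX.mul hY'.neg).add (hY.mul hX')).const_mul α
    have hE : HasDerivAt (fun t => Real.exp (α * ((x t) ^ 2 + (y t) ^ 2) / 2))
        (Real.exp (α * ((x s) ^ 2 + (y s) ^ 2) / 2) *
          (α * ((2 : ℕ) * x s ^ 1 * deriv x s + (2 : ℕ) * y s ^ 1 * deriv y s) / 2)) s :=
      ((((hX.pow 2).add (hY.pow 2)).const_mul α).div_const 2).exp
    have htot := hP.mul hE
    refine htot.congr_deriv ?_
    rw [hc, hd, ← hκα]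
    push_cast
    ring
  have hconst : ∀ s,
      (fun t => α * (x t * (-(deriv y t)) + y t * deriv x t) *
        Real.exp (α * ((x t) ^ 2 + (y t) ^ 2) / 2)) s
      = (fun t => α * (x t * (-(deriv y t)) + y t * deriv x t) *
        Real.exp (α * ((x t) ^ 2 + (y t) ^ 2) / 2)) 0 :=
    fun s => is_const_of_deriv_eq_zero (fun t => (hGd t).differentiableAt)
      (fun t => (hGd t).deriv) s 0
  refine ⟨α * (x 0 * (-(deriv y 0)) + y 0 * deriv x 0) *
      Real.exp (α * ((x 0) ^ 2 + (y 0) ^ 2) / 2), fun s => ?_⟩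
  rw [hss s, hν s]
  exact hconst s
end

section
/- For n ≥ 2, the Gauss curvature of the half-plane ℍ = {(x,r) : r > 0} equipped with the conformal metric g = r^{2(n−1)} e^{−(x²+r²)/2} (dx² + dr²) equals K(x,r) = (r² + (n−1))·r^{−2n}·e^{(x²+r²)/2}; in particular K > 0 everywhere on ℍ. -/
/-! Here `Δφ = -(n-1)/r² - 1` and `e^{-2φ} = r^{2-2n} e^{(x²+r²)/2}`, so
`K = (1 + (n-1)/r²) r^{2-2n} e^{(x²+r²)/2}`, whose factors are all positive once `n ≥ 1`. -/

open Real Topology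

lemma deriv_deriv_const_sub_sq_add_div_four (c a x : ℝ) :
    deriv (deriv fun t : ℝ => c - (t ^ 2 + a) / 4) x = -(1 / 2) := by
  have hd : deriv (fun t : ℝ => c - (t ^ 2 + a) / 4) = fun t => -(t / 2) := by
    funext t
    refine ((hasDerivAt_const t c).sub
      (((hasDerivAt_pow 2 t).add_const a).div_const 4)).deriv.trans ?_
    ring
  rw [hd]
  exact ((hasDerivAt_id x).div_const 2).neg.deriv

lemma deriv_deriv_mul_log_sub_add_sq_div_four (c a : ℝ) {r : ℝ} (hr : r ≠ 0) :
    deriv (deriv fun t : ℝ => c * log t - (a + t ^ 2) / 4) r = -(c / r ^ 2) - 1 / 2 := by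
  have hd : deriv (fun t : ℝ => c * log t - (a + t ^ 2) / 4)
      =ᶠ[𝓝 r] fun t => c * t⁻¹ - t / 2 := by
    filter_upwards [isOpen_ne.mem_nhds hr] with t ht
    refine (((hasDerivAt_log ht).const_mul c).sub
      (((hasDerivAt_pow 2 t).const_add a).div_const 4)).deriv.trans ?_
    ring
  rw [hd.deriv_eq,
    (((hasDerivAt_inv hr).const_mul c).fun_sub ((hasDerivAt_id' r).div_const 2)).deriv]
  field_simp

lemma exp_neg_two_mul_sub_one_mul_log_sub_div_four (n : ℕ) {r : ℝ} (hr : 0 < r) (q : ℝ) :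
    exp (-2 * (((n : ℝ) - 1) * log r - q / 4)) = r ^ 2 / r ^ (2 * n) * exp (q / 2) := by
  have hsplit : -2 * (((n : ℝ) - 1) * log r - q / 4)
      = ((2 : ℕ) : ℝ) * log r - ((2 * n : ℕ) : ℝ) * log r + q / 2 := by
    push_cast; ring
  rw [hsplit, exp_add, exp_sub, exp_nat_mul, exp_nat_mul, exp_log hr]

/-- The Gauss curvature of the metric r^{2(n-1)} e^{-(x²+r²)/2}(dx²+dr²) on the
half-plane, computed via K = -e^{-2φ}Δφ with φ = (n-1)ln r - (x²+r²)/4, equals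
(r² + (n-1)) r^{-2n} e^{(x²+r²)/2}, which is positive. -/
theorem stmt_5 (n : ℕ) (hn : 2 ≤ n) (x r : ℝ) (hr : 0 < r) :
    -Real.exp (-2 * (((n : ℝ) - 1) * Real.log r - (x ^ 2 + r ^ 2) / 4)) *
        (deriv (deriv (fun t : ℝ => ((n : ℝ) - 1) * Real.log r - (t ^ 2 + r ^ 2) / 4)) x +
         deriv (deriv (fun t : ℝ => ((n : ℝ) - 1) * Real.log t - (x ^ 2 + t ^ 2) / 4)) r)
      = (r ^ 2 + ((n : ℝ) - 1)) / r ^ (2 * n) * Real.exp ((x ^ 2 + r ^ 2) / 2) ∧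
    0 < (r ^ 2 + ((n : ℝ) - 1)) / r ^ (2 * n) * Real.exp ((x ^ 2 + r ^ 2) / 2) := by
  refine ⟨?_, ?_⟩
  · rw [deriv_deriv_const_sub_sq_add_div_four,
      deriv_deriv_mul_log_sub_add_sq_div_four _ _ hr.ne',
      exp_neg_two_mul_sub_one_mul_log_sub_div_four n hr]
    field_simp
    ring
  · have hn' : (1 : ℝ) ≤ n := by exact_mod_cast one_le_two.trans hn
    have hnum : 0 < r ^ 2 + ((n : ℝ) - 1) := by nlinarith
    positivity
end
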